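/- (Proposition 1.) Fix τ > 0 and an integer K ≥ 1. Let ρ_1 be an absolutely continuous Borel probability measure on Ω with ρ_1(∂Ω) = 0. Suppose that for each 1 ≤ k ≤ K there is a pair (T_k, F_k), with T_k : Ω → Ω Borel measurable and F_k ∈ 𝓕, minimizing (T, F) ↦ 𝓛(F, T_♯ρ_k) + (1/(2τ)) ∫_Ω ‖T(x) − x‖² dρ_k(x) over Borel measurable maps T : Ω → Ω and F ∈ 𝓕, and that each ρ_{k+1} := (T_k)_♯ρ_k is absolutely continuous with ρ_{k+1}(∂Ω) = 0. Then for each 1 ≤ k ≤ K, the measure ρ_{k+1} minimizes ν ↦ Z(ν) + (1/(2τ)) W2²(ν, ρ_k) over Borel probability measures ν on Ω; that is, the sequence (ρ_k) coincides with a minimizing movement scheme for Z starting from ρ_1. -/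

import Mathlib

open MeasureTheory

/-- Squared Wasserstein distance between Borel probability measures on a subset `Ω` of
Euclidean space: the infimum of the quadratic transport cost over all couplings. -/
noncomputable def W2sq {d : ℕ} {Ω : Set (EuclideanSpace ℝ (Fin d))}
    (α β : Measure Ω) : ℝ :=
  sInf { c : ℝ | ∃ γ : Measure (Ω × Ω), IsProbabilityMeasure γ ∧
    γ.map Prod.fst = α ∧ γ.map Prod.snd = β ∧
    c = ∫ p, ‖(p.1 : EuclideanSpace ℝ (Fin d)) - (p.2 : EuclideanSpace ℝ (Fin d))‖ ^ 2 ∂γ }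

/-- The quadratic transport cost of a map `T : Ω → Ω` with respect to `μ`. -/
noncomputable def transportCost {d : ℕ} {Ω : Set (EuclideanSpace ℝ (Fin d))}
    (T : Ω → Ω) (μ : Measure Ω) : ℝ :=
  ∫ x, ‖(T x : EuclideanSpace ℝ (Fin d)) - (x : EuclideanSpace ℝ (Fin d))‖ ^ 2 ∂μ

/-!
Given a competitor `ν`, take a nearly optimal coupling `γ` of `ν` and `ρ k`. Because `ρ k` is
absolutely continuous, its first coordinate has no atoms, so every measurable set can be cut into
pieces of any prescribed masses (intermediate values of a continuous distribution function). Cut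
`Ω` into finitely many small cells and split each cell of the second factor according to the
masses `γ` gives to the products of cells; sending each piece to the centre of the corresponding
first cell defines a map `T'` whose graph coupling `(T', id)_♯ ρ k` agrees with `γ` up to the size
of the cells. Hence `∫ L F' ∂(T'_♯ ρ k)` and `transportCost T' (ρ k)` are within `ε` of
`∫ L F' ∂ν` and `W2sq ν (ρ k)`. Comparing with the minimizing pair `(T k, F k)`, whose graph
coupling bounds `W2sq (ρ (k + 1)) (ρ k)` by `transportCost (T k) (ρ k)`, gives the inequality up
to a multiple of `ε`.
-/

open Set Filter Topology ENNReal

theorem continuous_measureReal_Iic (m : Measure ℝ) [IsFiniteMeasure m] [NullSingletonClass m] :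
    Continuous fun a => m.real (Iic a) := by
  refine continuous_iff_continuousAt.2 fun b => tendsto_iff_dist_tendsto_zero.2 ?_
  have habs : Tendsto (fun t => |t - b|) (𝓝 b) (𝓝 0) := by
    simpa using (continuous_sub_right b).abs.tendsto b
  have hIcc : Tendsto (fun t => m.real (Icc (b - |t - b|) (b + |t - b|))) (𝓝 b) (𝓝 0) :=
    (ENNReal.tendsto_toReal ENNReal.zero_ne_top).comp ((tendsto_measure_Icc m b).comp habs)
  refine squeeze_zero (fun _ => dist_nonneg) (fun t => ?_) hIcc
  have hsub : ∀ {a c : ℝ}, a ≤ c → Iic c \ Iic a ⊆ Icc (b - |t - b|) (b + |t - b|) →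
      |m.real (Iic c) - m.real (Iic a)| ≤ m.real (Icc (b - |t - b|) (b + |t - b|)) := by
    intro a c hac h
    rw [abs_of_nonneg (sub_nonneg.2 (measureReal_mono (Iic_subset_Iic.2 hac))),
      ← measureReal_sdiff (Iic_subset_Iic.2 hac) measurableSet_Iic]
    exact measureReal_mono h
  rw [Real.dist_eq]
  rcases le_total t b with h | h
  · rw [abs_sub_comm]
    refine hsub h fun y ⟨hyb, hyt⟩ => ?_
    simp only [mem_Iic, not_le] at hyb hyt
    constructor <;> linarith [le_abs_self (t - b), neg_abs_le (t - b)]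
  · refine hsub h fun y ⟨hyt, hyb⟩ => ?_
    simp only [mem_Iic, not_le] at hyb hyt
    constructor <;> linarith [le_abs_self (t - b), neg_abs_le (t - b)]

theorem exists_measure_Iic_eq (m : Measure ℝ) [IsFiniteMeasure m] [NullSingletonClass m]
    {r : ℝ≥0∞} (hr₀ : 0 < r) (hr : r < m univ) : ∃ a, m (Iic a) = r := by
  have hr_top : r ≠ ∞ := (hr.trans (measure_lt_top m univ)).ne
  have hbot : Tendsto (fun a => m.real (Iic a)) atBot (𝓝 0) := by
    have h := tendsto_measure_iInter_atBot (μ := m) (fun a => measurableSet_Iic.nullMeasurableSet)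
      monotone_Iic ⟨0, measure_ne_top m _⟩
    rw [iInter_Iic_eq_empty_iff.2 (by simp), measure_empty] at h
    exact (ENNReal.tendsto_toReal ENNReal.zero_ne_top).comp h
  have htop : Tendsto (fun a => m.real (Iic a)) atTop (𝓝 (m.real univ)) :=
    (ENNReal.tendsto_toReal (measure_ne_top m univ)).comp (tendsto_measure_Iic_atTop m)
  obtain ⟨a, ha⟩ := mem_range_of_exists_le_of_exists_ge (c := r.toReal)
    (continuous_measureReal_Iic m)
    ((hbot.eventually (eventually_le_nhds (ENNReal.toReal_pos hr₀.ne' hr_top))).exists)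
    ((htop.eventually (eventually_ge_nhds
      ((ENNReal.toReal_lt_toReal hr_top (measure_ne_top m univ)).2 hr))).exists)
  exact ⟨a, (ENNReal.toReal_eq_toReal_iff' (measure_ne_top m _) hr_top).1 ha⟩

section

variable {α : Type*} [MeasurableSpace α]

theorem exists_subset_measure_eq (μ : Measure α) [IsFiniteMeasure μ] {f : α → ℝ}
    (hf : Measurable f) (hfμ : ∀ t, μ (f ⁻¹' {t}) = 0) {s : Set α} (hs : MeasurableSet s)
    {r : ℝ≥0∞} (hr : r ≤ μ s) : ∃ t ⊆ s, MeasurableSet t ∧ μ t = r := by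
  rcases eq_zero_or_pos r with rfl | hr₀
  · exact ⟨∅, empty_subset s, MeasurableSet.empty, measure_empty⟩
  rcases hr.eq_or_lt with rfl | hr
  · exact ⟨s, subset_rfl, hs, rfl⟩
  set m := (μ.restrict s).map f
  have hm : ∀ A, MeasurableSet A → m A = μ (s ∩ f ⁻¹' A) := fun A hA => by
    rw [Measure.map_apply hf hA, Measure.restrict_apply (hf hA), inter_comm]
  have : NullSingletonClass m := ⟨fun t => by
    rw [hm _ (measurableSet_singleton t)]
    exact measure_mono_null inter_subset_right (hfμ t)⟩
  obtain ⟨a, ha⟩ := exists_measure_Iic_eq m hr₀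
    (by rwa [hm _ MeasurableSet.univ, preimage_univ, inter_univ])
  exact ⟨s ∩ f ⁻¹' Iic a, inter_subset_left, hs.inter (hf measurableSet_Iic),
    by rw [← ha, hm _ measurableSet_Iic]⟩

theorem exists_measurable_fin_measure_inter_preimage_eq (μ : Measure α) [IsFiniteMeasure μ]
    {f : α → ℝ} (hf : Measurable f) (hfμ : ∀ t, μ (f ⁻¹' {t}) = 0) (n : ℕ) {s : Set α}
    (hs : MeasurableSet s) (v : Fin (n + 1) → ℝ≥0∞) (hv : ∑ i, v i = μ s) :
    ∃ φ : α → Fin (n + 1), Measurable φ ∧ ∀ i, μ (s ∩ φ ⁻¹' {i}) = v i := by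
  induction n generalizing s with
  | zero =>
    refine ⟨fun _ => 0, measurable_const, fun i => ?_⟩
    simp [Fin.fin_one_eq_zero i, ← hv]
  | succ n ih =>
    rw [Fin.sum_univ_succ] at hv
    obtain ⟨t, hts, ht, htv⟩ := exists_subset_measure_eq μ hf hfμ hs (hv ▸ le_self_add)
    obtain ⟨φ, hφ, hφv⟩ := ih (hs.diff ht) (fun i => v i.succ) (by
      rw [measure_sdiff hts ht.nullMeasurableSet (measure_ne_top μ t), ← hv, htv,
        ENNReal.add_sub_cancel_left (htv ▸ measure_ne_top μ t)])
    classical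
    refine ⟨fun y => if y ∈ t then 0 else (φ y).succ,
      Measurable.ite ht measurable_const ((measurable_from_top (f := Fin.succ)).comp hφ),
      Fin.cases ?_ fun i => ?_⟩
    · convert htv using 2
      ext y
      by_cases hy : y ∈ t
      · simp [hy, hts hy]
      · simp [hy]
    · convert hφv i using 2
      ext y
      by_cases hy : y ∈ t
      · simp [hy, (Fin.succ_ne_zero i).symm]
      · simp [hy]

theorem exists_measurable_map_prodMk_eq (μ : Measure α) [IsFiniteMeasure μ] {f : α → ℝ}
    (hf : Measurable f) (hfμ : ∀ t, μ (f ⁻¹' {t}) = 0) {ι : Type*} [MeasurableSpace ι]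
    [Countable ι] [MeasurableSingletonClass ι] {q : α → ι} (hq : Measurable q) {n : ℕ}
    (π : Measure (Fin (n + 1) × ι)) (hπ : π.map Prod.snd = μ.map q) :
    ∃ ψ : α → Fin (n + 1), Measurable ψ ∧ μ.map (fun y => (ψ y, q y)) = π := by
  have hfiber : ∀ j, ∃ φ : α → Fin (n + 1), Measurable φ ∧
      ∀ i, μ (q ⁻¹' {j} ∩ φ ⁻¹' {i}) = π {(i, j)} := fun j => by
    refine exists_measurable_fin_measure_inter_preimage_eq μ hf hfμ n
      (hq (measurableSet_singleton j)) _ ?_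
    rw [← Measure.map_apply hq (measurableSet_singleton j), ← hπ,
      Measure.map_apply measurable_snd (measurableSet_singleton j)]
    have hfib : Prod.snd ⁻¹' {j} =
        ((Finset.univ ×ˢ {j} : Finset (Fin (n + 1) × ι)) : Set (Fin (n + 1) × ι)) := by
      ext ⟨i, j'⟩; simp [eq_comm]
    rw [hfib, ← sum_measure_singleton, Finset.sum_product,
      Finset.sum_congr rfl fun i _ => Finset.sum_singleton _ _]
  choose φ hφ hφπ using hfiber
  have hψ : Measurable fun y => φ (q y) y :=
    (measurable_from_prod_countable_right (f := fun p : ι × α => φ p.1 p.2) hφ).comp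
      (hq.prodMk measurable_id)
  refine ⟨fun y => φ (q y) y, hψ, Measure.ext_of_singleton fun ⟨i, j⟩ => ?_⟩
  rw [Measure.map_apply (hψ.prodMk hq) (measurableSet_singleton _), ← hφπ j i]
  congr 1
  ext y
  simp only [mem_preimage, mem_singleton_iff, Prod.mk.injEq, mem_inter_iff]
  constructor <;> rintro ⟨rfl, rfl⟩ <;> exact ⟨rfl, rfl⟩

theorem dist_integral_le_of_forall_dist_le {E : Type*} [NormedAddCommGroup E] [NormedSpace ℝ E]
    {μ : Measure α} [IsFiniteMeasure μ] {f₁ f₂ : α → E} (h₁ : Integrable f₁ μ)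
    (h₂ : Integrable f₂ μ) {η : ℝ} (h : ∀ x, dist (f₁ x) (f₂ x) ≤ η) :
    dist (∫ x, f₁ x ∂μ) (∫ x, f₂ x ∂μ) ≤ η * μ.real univ := by
  rw [dist_eq_norm, ← integral_sub h₁ h₂]
  exact norm_integral_le_of_norm_le_const
    (ae_of_all _ fun x => (dist_eq_norm _ _).symm.trans_le (h x))

theorem Continuous.integrable_comp_of_compactSpace {X : Type*} [TopologicalSpace X]
    [CompactSpace X] [MeasurableSpace X] [OpensMeasurableSpace X] {g : X → ℝ} (hg : Continuous g)
    {μ : Measure α} [IsFiniteMeasure μ] {h : α → X} (hh : Measurable h) :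
    Integrable (fun y => g (h y)) μ :=
  (integrable_map_measure hg.aestronglyMeasurable hh.aemeasurable).1
    (hg.integrable_of_hasCompactSupport (HasCompactSupport.of_compactSpace g))

end

section CompactMetric

variable {X : Type*} [MetricSpace X] [CompactSpace X] [Nonempty X] [MeasurableSpace X]
  [OpensMeasurableSpace X]

theorem exists_measurable_fin_dist_lt {δ : ℝ} (hδ : 0 < δ) :
    ∃ (n : ℕ) (x : Fin (n + 1) → X) (q : X → Fin (n + 1)),
      Measurable q ∧ ∀ y, dist (x (q y)) y < δ := by
  set e := TopologicalSpace.denseSeq X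
  obtain ⟨s, hs⟩ := isCompact_univ.elim_finite_subcover (fun k => Metric.ball (e k) δ)
    (fun _ => Metric.isOpen_ball) fun y _ => by
      obtain ⟨k, hk⟩ := (TopologicalSpace.denseRange_denseSeq X).exists_dist_lt y hδ
      exact mem_iUnion.2 ⟨k, Metric.mem_ball.2 hk⟩
  set N := s.sup id
  refine ⟨N, fun i => e i, fun y => ⟨SimpleFunc.nearestPtInd e N y,
    Nat.lt_succ_of_le (SimpleFunc.nearestPtInd_le e N y)⟩, ?_, fun y => ?_⟩
  · refine measurable_to_countable' fun i => ?_
    convert (SimpleFunc.nearestPtInd e N).measurableSet_fiber i.val using 1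
    ext y; simp [Fin.ext_iff]
  · obtain ⟨k, hk, hyk⟩ := mem_iUnion₂.1 (hs (mem_univ y))
    rw [← edist_lt_ofReal]
    calc edist (e (SimpleFunc.nearestPtInd e N y)) y = edist (SimpleFunc.nearestPt e N y) y := rfl
      _ ≤ edist (e k) y := SimpleFunc.edist_nearestPt_le e y (Finset.le_sup (f := id) hk)
      _ < ENNReal.ofReal δ := edist_lt_ofReal.2 (Metric.mem_ball'.1 hyk)

theorem exists_measurable_dist_integral_graph_le (μ : Measure X) [IsFiniteMeasure μ]
    {f : X → ℝ} (hf : Measurable f) (hfμ : ∀ t, μ (f ⁻¹' {t}) = 0) (γ : Measure (X × X))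
    (hγ : γ.map Prod.snd = μ) {δ : ℝ} (hδ : 0 < δ) :
    ∃ T : X → X, Measurable T ∧ ∀ g : X × X → ℝ, Continuous g → ∀ η : ℝ,
      (∀ p p', dist p p' < δ → dist (g p) (g p') ≤ η) →
      dist (∫ y, g (T y, y) ∂μ) (∫ p, g p ∂γ) ≤ 2 * η * μ.real univ := by
  have hγμ : γ univ = μ univ := by
    rw [← hγ, Measure.map_apply measurable_snd MeasurableSet.univ, preimage_univ]
  have : IsFiniteMeasure γ := ⟨hγμ ▸ measure_lt_top μ univ⟩
  obtain ⟨n, x, q, hq, hxq⟩ := exists_measurable_fin_dist_lt (X := X) hδ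
  obtain ⟨ψ, hψ, hψq⟩ := exists_measurable_map_prodMk_eq μ hf hfμ hq
    (γ.map (Prod.map q q)) (by
      rw [Measure.map_map measurable_snd (hq.prodMap hq), ← hγ, Measure.map_map hq measurable_snd]
      rfl)
  refine ⟨x ∘ ψ, measurable_from_top.comp hψ, fun g hg η hgη => ?_⟩
  -- `(ψ, q)_♯ μ = (q × q)_♯ γ`: both integrals are within `η` times the mass of the same
  -- integral of `g` over pairs of cell centres.
  have hdisc : ∫ y, g (x (ψ y), x (q y)) ∂μ = ∫ p, g (x (q p.1), x (q p.2)) ∂γ := by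
    have h := integral_map (μ := μ) (hψ.prodMk hq).aemeasurable
      (f := fun p : Fin (n + 1) × Fin (n + 1) => g (x p.1, x p.2))
      (measurable_of_countable _).aestronglyMeasurable
    rw [hψq, integral_map (hq.prodMap hq).aemeasurable
      (measurable_of_countable _).aestronglyMeasurable] at h
    exact h.symm
  have h₁ : dist (∫ y, g (x (ψ y), y) ∂μ) (∫ y, g (x (ψ y), x (q y)) ∂μ) ≤ η * μ.real univ :=
    dist_integral_le_of_forall_dist_le
      (hg.integrable_comp_of_compactSpace ((measurable_from_top.comp hψ).prodMk measurable_id))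
      (hg.integrable_comp_of_compactSpace
        ((measurable_from_top.comp hψ).prodMk (measurable_from_top.comp hq)))
      fun y => hgη _ _ (by simpa [Prod.dist_eq, dist_comm] using hxq y)
  have h₂ : dist (∫ p, g (x (q p.1), x (q p.2)) ∂γ) (∫ p, g p ∂γ) ≤ η * μ.real univ := by
    rw [measureReal_def, ← hγμ]
    exact dist_integral_le_of_forall_dist_le
      (hg.integrable_comp_of_compactSpace
        ((measurable_from_top.comp hq).prodMap (measurable_from_top.comp hq)))
      (hg.integrable_comp_of_compactSpace measurable_id)
      fun p => hgη _ _ (by simpa [Prod.dist_eq] using ⟨hxq p.1, hxq p.2⟩)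
  calc dist (∫ y, g ((x ∘ ψ) y, y) ∂μ) (∫ p, g p ∂γ)
      ≤ dist (∫ y, g (x (ψ y), y) ∂μ) (∫ y, g (x (ψ y), x (q y)) ∂μ)
        + dist (∫ p, g (x (q p.1), x (q p.2)) ∂γ) (∫ p, g p ∂γ) := by
        rw [← hdisc]; exact dist_triangle _ _ _
    _ ≤ 2 * η * μ.real univ := by linarith

end CompactMetric

theorem EuclideanSpace.volume_setOf_apply_eq {d : ℕ} (i : Fin d) (t : ℝ) :
    volume {z : EuclideanSpace ℝ (Fin d) | z i = t} = 0 := by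
  set L : EuclideanSpace ℝ (Fin d) →ₗ[ℝ] ℝ := (EuclideanSpace.proj (𝕜 := ℝ) i).toLinearMap
  obtain ⟨c, -, hc⟩ := L.exists_map_addHaar_eq_smul_addHaar volume volume
    fun s => ⟨EuclideanSpace.single i s, by simp [L]⟩
  have h := congrArg (fun m : Measure ℝ => m {t}) hc
  simp only [Measure.smul_apply, Real.volume_singleton, smul_zero] at h
  rwa [Measure.map_apply L.continuous_of_finiteDimensional.measurable
    (measurableSet_singleton t)] at h

section Euclidean

variable {d : ℕ} {Ω : Set (EuclideanSpace ℝ (Fin d))}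

theorem measure_preimage_apply_singleton_eq_zero (μ : Measure Ω)
    (hμ : μ.map (Subtype.val : Ω → EuclideanSpace ℝ (Fin d)) ≪ volume) (i : Fin d) (t : ℝ) :
    μ ((fun y : Ω => (y : EuclideanSpace ℝ (Fin d)) i) ⁻¹' {t}) = 0 := by
  have hmeas : MeasurableSet {z : EuclideanSpace ℝ (Fin d) | z i = t} :=
    measurableSet_eq_fun (EuclideanSpace.proj i).continuous.measurable measurable_const
  have h := hμ (EuclideanSpace.volume_setOf_apply_eq i t)
  rwa [Measure.map_apply measurable_subtype_coe hmeas] at h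

theorem W2sq_map_le_transportCost (μ : Measure Ω) [IsProbabilityMeasure μ] {T : Ω → Ω}
    (hT : Measurable T) : W2sq (μ.map T) μ ≤ transportCost T μ := by
  have hpair : Measurable fun y => (T y, y) := hT.prodMk measurable_id
  refine csInf_le ⟨0, ?_⟩ ⟨μ.map fun y => (T y, y),
    Measure.isProbabilityMeasure_map hpair.aemeasurable, ?_, ?_, ?_⟩
  · rintro c ⟨γ, -, -, -, rfl⟩
    exact integral_nonneg fun _ => sq_nonneg _
  · rw [Measure.map_map measurable_fst hpair]; rfl
  · rw [Measure.map_map measurable_snd hpair]; exact Measure.map_id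
  · rw [integral_map hpair.aemeasurable (by fun_prop)]; rfl

theorem exists_coupling_integral_lt_W2sq_add (α β : Measure Ω) [IsProbabilityMeasure α]
    [IsProbabilityMeasure β] {ε : ℝ} (hε : 0 < ε) :
    ∃ γ : Measure (Ω × Ω), γ.map Prod.fst = α ∧ γ.map Prod.snd = β ∧
      ∫ p, ‖(p.1 : EuclideanSpace ℝ (Fin d)) - (p.2 : EuclideanSpace ℝ (Fin d))‖ ^ 2 ∂γ
        < W2sq α β + ε := by
  obtain ⟨c, ⟨γ, -, hγ₁, hγ₂, rfl⟩, hc⟩ :=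
    exists_lt_of_csInf_lt (by exact ⟨_, α.prod β, inferInstance, by simp, by simp, rfl⟩)
      (lt_add_of_pos_right (W2sq α β) hε)
  exact ⟨γ, hγ₁, hγ₂, hc⟩

theorem exists_measurable_integral_map_le_and_transportCost_le [CompactSpace Ω]
    (μ ν : Measure Ω) [IsProbabilityMeasure μ] [IsProbabilityMeasure ν] {f : Ω → ℝ}
    (hf : Measurable f) (hfμ : ∀ t, μ (f ⁻¹' {t}) = 0) {G : Ω → ℝ} (hG : Continuous G)
    {ε : ℝ} (hε : 0 < ε) :
    ∃ T : Ω → Ω, Measurable T ∧ ∫ x, G x ∂(μ.map T) ≤ ∫ x, G x ∂ν + ε ∧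
      transportCost T μ ≤ W2sq ν μ + ε := by
  have : Nonempty Ω := nonempty_of_isProbabilityMeasure ν
  obtain ⟨γ, hγ₁, hγ₂, hγ⟩ := exists_coupling_integral_lt_W2sq_add ν μ (half_pos hε)
  have hmod : ∀ g : Ω × Ω → ℝ, Continuous g →
      ∃ δ > 0, ∀ p p', dist p p' < δ → dist (g p) (g p') ≤ ε / 4 := fun g hg => by
    obtain ⟨δ, hδ, h⟩ := Metric.uniformContinuous_iff.1
      (CompactSpace.uniformContinuous_of_continuous hg) (ε / 4) (by positivity)
    exact ⟨δ, hδ, fun p p' hp => (h hp).le⟩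
  have hcost : Continuous fun p : Ω × Ω =>
      ‖(p.1 : EuclideanSpace ℝ (Fin d)) - (p.2 : EuclideanSpace ℝ (Fin d))‖ ^ 2 := by
    fun_prop
  obtain ⟨δ₁, hδ₁, h₁⟩ := hmod (fun p => G p.1) (by fun_prop)
  obtain ⟨δ₂, hδ₂, h₂⟩ := hmod _ hcost
  obtain ⟨T, hT, hTγ⟩ :=
    exists_measurable_dist_integral_graph_le μ hf hfμ γ hγ₂ (lt_min hδ₁ hδ₂)
  have hG₁ := hTγ _ (by fun_prop) _ fun p p' hp => h₁ p p' (hp.trans_le (min_le_left _ _))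
  have hcost₁ := hTγ _ hcost _ fun p p' hp => h₂ p p' (hp.trans_le (min_le_right _ _))
  rw [probReal_univ, mul_one, Real.dist_eq] at hG₁ hcost₁
  dsimp only at hG₁ hcost₁
  refine ⟨T, hT, ?_, ?_⟩
  · rw [integral_map hT.aemeasurable hG.aestronglyMeasurable, ← hγ₁,
      integral_map measurable_fst.aemeasurable hG.aestronglyMeasurable]
    linarith [(abs_sub_le_iff.1 hG₁).1]
  · unfold transportCost
    linarith [(abs_sub_le_iff.1 hcost₁).1]

end Euclidean

theorem stmt3_general {d : ℕ} (hd : 1 ≤ d) (Ω : Set (EuclideanSpace ℝ (Fin d)))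
    (hcomp : IsCompact Ω)
    (𝓕 : Type*) [MetricSpace 𝓕]
    (L : 𝓕 → Ω → ℝ) (hLcont : Continuous fun p : 𝓕 × Ω => L p.1 p.2)
    (hLnonneg : ∀ F x, 0 ≤ L F x)
    (τ : ℝ) (hτ : 0 < τ) (K : ℕ)
    (ρ : ℕ → Measure Ω) (T : ℕ → Ω → Ω) (F : ℕ → 𝓕)
    (hprob : ∀ k, 1 ≤ k → k ≤ K + 1 → IsProbabilityMeasure (ρ k))
    (hac : ∀ k, 1 ≤ k → k ≤ K + 1 →
      (ρ k).map (Subtype.val : Ω → EuclideanSpace ℝ (Fin d)) ≪ volume)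
    (hTmeas : ∀ k, 1 ≤ k → k ≤ K → Measurable (T k))
    (hmin : ∀ k, 1 ≤ k → k ≤ K → ∀ T' : Ω → Ω, Measurable T' → ∀ F' : 𝓕,
      (∫ x, L (F k) x ∂((ρ k).map (T k))) + (1 / (2 * τ)) * transportCost (T k) (ρ k)
        ≤ (∫ x, L F' x ∂((ρ k).map T')) + (1 / (2 * τ)) * transportCost T' (ρ k))
    (hstep : ∀ k, 1 ≤ k → k ≤ K → ρ (k + 1) = (ρ k).map (T k)) :
    ∀ k, 1 ≤ k → k ≤ K → ∀ ν : Measure Ω, IsProbabilityMeasure ν →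
      (⨅ F' : 𝓕, ∫ x, L F' x ∂(ρ (k + 1))) + (1 / (2 * τ)) * W2sq (ρ (k + 1)) (ρ k)
        ≤ (⨅ F' : 𝓕, ∫ x, L F' x ∂ν) + (1 / (2 * τ)) * W2sq ν (ρ k) := by
  intro k hk₁ hkK ν hν
  have : IsProbabilityMeasure (ρ k) := hprob k hk₁ (by omega)
  have : CompactSpace Ω := isCompact_iff_compactSpace.mp hcomp
  have : Nonempty 𝓕 := ⟨F k⟩
  set c := 1 / (2 * τ)
  have hc : 0 < c := by positivity
  have hZ : BddBelow (range fun F' => ∫ x, L F' x ∂(ρ (k + 1))) :=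
    ⟨0, by rintro _ ⟨F', rfl⟩; exact integral_nonneg (hLnonneg F')⟩
  have hatom := measure_preimage_apply_singleton_eq_zero (ρ k) (hac k hk₁ (by omega)) ⟨0, hd⟩
  have hρ := hstep k hk₁ hkK
  have hW : W2sq (ρ (k + 1)) (ρ k) ≤ transportCost (T k) (ρ k) := by
    rw [hρ]; exact W2sq_map_le_transportCost (ρ k) (hTmeas k hk₁ hkK)
  have key : ∀ ε > 0, (⨅ F', ∫ x, L F' x ∂(ρ (k + 1))) + c * W2sq (ρ (k + 1)) (ρ k)
      ≤ (⨅ F', ∫ x, L F' x ∂ν) + c * W2sq ν (ρ k) + (2 + c) * ε := by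
    intro ε hε
    obtain ⟨F', hF'⟩ := exists_lt_of_ciInf_lt (lt_add_of_pos_right (⨅ F', ∫ x, L F' x ∂ν) hε)
    obtain ⟨T', hT', hLT', hcostT'⟩ := exists_measurable_integral_map_le_and_transportCost_le
      (ρ k) ν (by fun_prop) hatom (G := L F') (hLcont.comp (Continuous.prodMk_right F')) hε
    calc (⨅ F', ∫ x, L F' x ∂(ρ (k + 1))) + c * W2sq (ρ (k + 1)) (ρ k)
        ≤ ∫ x, L (F k) x ∂(ρ (k + 1)) + c * transportCost (T k) (ρ k) := by
          gcongr; exact ciInf_le hZ _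
      _ ≤ ∫ x, L F' x ∂((ρ k).map T') + c * transportCost T' (ρ k) := by
          rw [hρ]; exact hmin k hk₁ hkK T' hT' F'
      _ ≤ (∫ x, L F' x ∂ν + ε) + c * (W2sq ν (ρ k) + ε) := by gcongr
      _ ≤ _ := by linarith
  refine le_of_forall_pos_le_add fun ε hε => ?_
  have h := key (ε / (2 + c)) (by positivity)
  rwa [mul_div_cancel₀ _ (by positivity : (2 + c) ≠ 0)] at h

/-- Proposition 1: the measures produced by the transport-regularized module-wise problems
coincide with a minimizing movement scheme for `Z ν = ⨅ F, ∫ L F x ∂ν`. -/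
theorem stmt3 {d : ℕ} (hd : 1 ≤ d) (Ω : Set (EuclideanSpace ℝ (Fin d)))
    (hconv : Convex ℝ Ω) (hcomp : IsCompact Ω)
    (hfront : volume (frontier Ω) = 0)
    (𝓕 : Type*) [MetricSpace 𝓕] [CompactSpace 𝓕] [Nonempty 𝓕]
    (L : 𝓕 → Ω → ℝ) (hLcont : Continuous fun p : 𝓕 × Ω => L p.1 p.2)
    (hLnonneg : ∀ F x, 0 ≤ L F x)
    (τ : ℝ) (hτ : 0 < τ) (K : ℕ) (hK : 1 ≤ K)
    (ρ : ℕ → Measure Ω) (T : ℕ → Ω → Ω) (F : ℕ → 𝓕)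
    (hprob : ∀ k, 1 ≤ k → k ≤ K + 1 → IsProbabilityMeasure (ρ k))
    (hac : ∀ k, 1 ≤ k → k ≤ K + 1 →
      (ρ k).map (Subtype.val : Ω → EuclideanSpace ℝ (Fin d)) ≪ volume)
    (hρfront : ∀ k, 1 ≤ k → k ≤ K + 1 →
      (ρ k).map (Subtype.val : Ω → EuclideanSpace ℝ (Fin d)) (frontier Ω) = 0)
    (hTmeas : ∀ k, 1 ≤ k → k ≤ K → Measurable (T k))
    (hmin : ∀ k, 1 ≤ k → k ≤ K → ∀ T' : Ω → Ω, Measurable T' → ∀ F' : 𝓕,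
      (∫ x, L (F k) x ∂((ρ k).map (T k))) + (1 / (2 * τ)) * transportCost (T k) (ρ k)
        ≤ (∫ x, L F' x ∂((ρ k).map T')) + (1 / (2 * τ)) * transportCost T' (ρ k))
    (hstep : ∀ k, 1 ≤ k → k ≤ K → ρ (k + 1) = (ρ k).map (T k)) :
    ∀ k, 1 ≤ k → k ≤ K → ∀ ν : Measure Ω, IsProbabilityMeasure ν →
      (⨅ F' : 𝓕, ∫ x, L F' x ∂(ρ (k + 1))) + (1 / (2 * τ)) * W2sq (ρ (k + 1)) (ρ k)
        ≤ (⨅ F' : 𝓕, ∫ x, L F' x ∂ν) + (1 / (2 * τ)) * W2sq ν (ρ k) :=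
  stmt3_general hd Ω hcomp 𝓕 L hLcont hLnonneg τ hτ K ρ T F hprob hac hTmeas hmin hstep
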